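/- Let (Γ,C) be a split-step quantum walk such that the limits a(±∞), b(±∞) exist, and suppose that either |a(+∞)| < |p| < |a(−∞)| or |a(−∞)| < |p| < |a(+∞)|. Then the unitary operator U = ΓC has at least one eigenvector with eigenvalue 1 or −1: there exists a nonzero ψ ∈ ℓ²(ℤ)⊕ℓ²(ℤ) with Uψ = ψ or Uψ = −ψ. -/

import Mathlib

noncomputable section
open Complex ContinuousLinearMap Filter
open scoped ENNReal ComplexConjugate

/-- The Hilbert space `ℓ²(ℤ)`. -/
abbrev l2Z : Type := lp (fun _ : ℤ => ℂ) 2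

lemma memℓp_comp_equiv (e : ℤ ≃ ℤ) {f : ℤ → ℂ} (hf : Memℓp f 2) :
    Memℓp (fun x => f (e x)) 2 := by
  apply memℓp_gen
  have h := hf.summable (by norm_num : (0:ℝ) < (2 : ℝ≥0∞).toReal)
  exact e.summable_iff.mpr h

/-- The left shift `(Lψ)(x) = ψ(x+1)` as a linear isometry equivalence of `ℓ²(ℤ)`. -/
def shiftL : l2Z ≃ₗᵢ[ℂ] l2Z where
  toFun ψ := ⟨fun x => ψ (x + 1), memℓp_comp_equiv (Equiv.addRight 1) (lp.memℓp ψ)⟩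
  invFun ψ := ⟨fun x => ψ (x - 1), memℓp_comp_equiv (Equiv.subRight 1) (lp.memℓp ψ)⟩
  map_add' ψ φ := rfl
  map_smul' c ψ := rfl
  left_inv ψ := by ext x; simp
  right_inv ψ := by ext x; simp
  norm_map' ψ := by
    have h2 : (0:ℝ) < (2 : ℝ≥0∞).toReal := by norm_num
    rw [lp.norm_eq_tsum_rpow h2, lp.norm_eq_tsum_rpow h2]
    congr 1
    exact (Equiv.addRight (1:ℤ)).tsum_eq (fun x => ‖ψ x‖ ^ (2 : ℝ≥0∞).toReal)

/-- The left shift `L` on `ℓ²(ℤ)` as a continuous linear map. -/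
def Lop : l2Z →L[ℂ] l2Z := shiftL.toLinearIsometry.toContinuousLinearMap

lemma norm_mul_le_of_le_one {c : ℤ → ℂ} (hc : ∀ x, ‖c x‖ ≤ 1) (f : ℤ → ℂ) (x : ℤ) :
    ‖c x * f x‖ ≤ ‖f x‖ := by
  calc ‖c x * f x‖ = ‖c x‖ * ‖f x‖ := norm_mul _ _
    _ ≤ 1 * ‖f x‖ := mul_le_mul_of_nonneg_right (hc x) (norm_nonneg _)
    _ = ‖f x‖ := one_mul _

lemma memℓp_mul {c : ℤ → ℂ} (hc : ∀ x, ‖c x‖ ≤ 1) {f : ℤ → ℂ} (hf : Memℓp f 2) :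
    Memℓp (fun x => c x * f x) 2 := by
  apply memℓp_gen
  have h := hf.summable (by norm_num : (0:ℝ) < (2 : ℝ≥0∞).toReal)
  apply h.of_nonneg_of_le (fun x => by positivity)
  intro x
  exact Real.rpow_le_rpow (norm_nonneg _) (norm_mul_le_of_le_one hc f x) (by norm_num)

/-- The multiplication operator on `ℓ²(ℤ)` by a function `c : ℤ → ℂ` with `‖c x‖ ≤ 1`. -/
def mulOp (c : ℤ → ℂ) (hc : ∀ x, ‖c x‖ ≤ 1) : l2Z →L[ℂ] l2Z := by
  refine LinearMap.mkContinuous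
    { toFun := fun ψ => ⟨fun x => c x * ψ x, memℓp_mul hc (lp.memℓp ψ)⟩
      map_add' := fun ψ φ => by ext x; simp [mul_add] <;> rfl
      map_smul' := fun a ψ => by ext x; simp; ring } 1 (fun ψ => ?_)
  rw [one_mul]
  have h2 : (0:ℝ) < (2 : ℝ≥0∞).toReal := by norm_num
  rw [lp.norm_eq_tsum_rpow h2, lp.norm_eq_tsum_rpow h2]
  apply Real.rpow_le_rpow (tsum_nonneg (fun x => by positivity))
  · apply Summable.tsum_le_tsum
    · intro x
      exact Real.rpow_le_rpow (norm_nonneg _) (norm_mul_le_of_le_one hc _ x) (by norm_num)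
    · exact (memℓp_mul hc (lp.memℓp ψ)).summable h2
    · exact (lp.memℓp ψ).summable h2
  · positivity

/-- The Hilbert space `ℓ²(ℤ) ⊕ ℓ²(ℤ)`. -/
abbrev H2 : Type := WithLp 2 (l2Z × l2Z)

/-- The 2×2 block operator `[[A,B],[C,D]]` on the Hilbert space direct sum `E ⊕ E`. -/
def blockOp {E : Type*} [NormedAddCommGroup E] [NormedSpace ℂ E]
    (A B C D : E →L[ℂ] E) : WithLp 2 (E × E) →L[ℂ] WithLp 2 (E × E) :=
  (WithLp.prodContinuousLinearEquiv 2 ℂ E E).symm.toContinuousLinearMap ∘L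
    ((A ∘L ContinuousLinearMap.fst ℂ E E + B ∘L ContinuousLinearMap.snd ℂ E E).prod
      (C ∘L ContinuousLinearMap.fst ℂ E E + D ∘L ContinuousLinearMap.snd ℂ E E)) ∘L
    (WithLp.prodContinuousLinearEquiv 2 ℂ E E).toContinuousLinearMap

/-- The shift operator `Γ = [[p, qL],[q̄L*, -p]]` of a split-step quantum walk. -/
def GammaOp (p : ℝ) (q : ℂ) : H2 →L[ℂ] H2 :=
  blockOp ((p : ℂ) • 1) (q • Lop)
    ((conj q) • ContinuousLinearMap.adjoint Lop) (-((p : ℂ) • 1))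

lemma normA_le_one {a : ℤ → ℝ} {b : ℤ → ℂ} (hab : ∀ x, (a x)^2 + ‖b x‖^2 = 1) (x : ℤ) :
    ‖((a x : ℂ))‖ ≤ 1 := by
  rw [Complex.norm_real, Real.norm_eq_abs]
  nlinarith [hab x, norm_nonneg (b x), abs_nonneg (a x), _root_.sq_abs (a x), sq_nonneg (‖b x‖)]

lemma normB_le_one {a : ℤ → ℝ} {b : ℤ → ℂ} (hab : ∀ x, (a x)^2 + ‖b x‖^2 = 1) (x : ℤ) :
    ‖b x‖ ≤ 1 := by
  nlinarith [hab x, norm_nonneg (b x), sq_nonneg (a x)]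

/-- The coin operator `C = [[a, b*],[b, -a]]` of a split-step quantum walk, acting as the
multiplication operator by the matrix `[[a(x), conj (b(x))],[b(x), -a(x)]]`. -/
def CoinOp (a : ℤ → ℝ) (b : ℤ → ℂ) (hab : ∀ x, (a x)^2 + ‖b x‖^2 = 1) : H2 →L[ℂ] H2 :=
  blockOp (mulOp (fun x => (a x : ℂ)) (normA_le_one hab))
    (mulOp (fun x => conj (b x)) (fun x => by rw [RCLike.norm_conj]; exact normB_le_one hab x))
    (mulOp b (normB_le_one hab))
    (-(mulOp (fun x => (a x : ℂ)) (normA_le_one hab)))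

lemma adjoint_Lop_apply (ψ : l2Z) (x : ℤ) : (ContinuousLinearMap.adjoint Lop ψ) x = ψ (x-1) := by
  have h : ContinuousLinearMap.adjoint Lop = shiftL.symm.toLinearIsometry.toContinuousLinearMap :=
    LinearIsometryEquiv.adjoint_eq_symm (𝕜 := ℂ) shiftL
  rw [h]; rfl

lemma blockOp_pair (A B C D : l2Z →L[ℂ] l2Z) (f g : l2Z) :
    (blockOp A B C D (WithLp.toLp 2 (f,g) : H2)) = (WithLp.toLp 2 (A f + B g, C f + D g) : H2) := rfl

lemma pair_eq_iff (f g f' g' : l2Z) : (WithLp.toLp 2 (f,g) : H2) = (WithLp.toLp 2 (f',g') : H2) ↔ f = f' ∧ g = g' :=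
  (WithLp.toLp_injective 2).eq_iff.trans Prod.ext_iff

lemma GammaOp_pair (p : ℝ) (q : ℂ) (f g : l2Z) :
    GammaOp p q (WithLp.toLp 2 (f,g) : H2) =
      (WithLp.toLp 2 ((p:ℂ) • f + q • (Lop g),
        (conj q) • (ContinuousLinearMap.adjoint Lop f) + (-((p:ℂ) • g))) : H2) := rfl

lemma CoinOp_pair (a : ℤ → ℝ) (b : ℤ → ℂ) (hab : ∀ x, (a x)^2 + ‖b x‖^2 = 1) (f g : l2Z) :
    CoinOp a b hab (WithLp.toLp 2 (f,g) : H2) =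
      (WithLp.toLp 2 (mulOp (fun x => (a x : ℂ)) (normA_le_one hab) f
          + mulOp (fun x => conj (b x)) (fun x => by rw [RCLike.norm_conj]; exact normB_le_one hab x) g,
        mulOp b (normB_le_one hab) f + (-(mulOp (fun x => (a x : ℂ)) (normA_le_one hab) g))) : H2) := rfl

lemma assemble (p : ℝ) (q : ℂ) (hpq : p ^ 2 + ‖q‖ ^ 2 = 1)
    (a : ℤ → ℝ) (b : ℤ → ℂ) (hab : ∀ x, (a x) ^ 2 + ‖b x‖ ^ 2 = 1)
    (ε δ : ℝ) (hε : ε = 1 ∨ ε = -1) (hδ : δ = 1 ∨ δ = -1)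
    (hεp : (ε:ℂ) - (p:ℂ) ≠ 0)
    (lam : ℂ) (hlam : q * lam = (ε:ℂ) - (p:ℂ))
    (f : ℤ → ℂ) (hf : Memℓp f 2) (x₀ : ℤ) (hfne : f x₀ ≠ 0)
    (hC1 : ∀ x, ((a x : ℂ) - (δ:ℂ)) * f x + lam * conj (b x) * f (x-1) = 0)
    (hC2 : ∀ x, b x * f x - ((a x : ℂ) + (δ:ℂ)) * lam * f (x-1) = 0) :
    ∃ ψ : H2, ψ ≠ 0 ∧
      ((GammaOp p q ∘L CoinOp a b hab) ψ = ψ ∨ (GammaOp p q ∘L CoinOp a b hab) ψ = -ψ) := by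
  have hg : Memℓp (fun x => lam * f (x-1)) 2 :=
    Memℓp.const_mul (memℓp_comp_equiv (Equiv.subRight (1:ℤ)) hf) lam
  set fL : l2Z := ⟨f, hf⟩ with hfL
  set gL : l2Z := ⟨fun x => lam * f (x-1), hg⟩ with hgL
  have hfLx : ∀ x, fL x = f x := fun _ => rfl
  have hgLx : ∀ x, gL x = lam * f (x-1) := fun _ => rfl
  refine ⟨(WithLp.toLp 2 (fL, gL) : H2), ?_, ?_⟩
  · intro h
    have h1 : fL = 0 := congrArg (fun v : H2 => (WithLp.ofLp v).1) h
    have := congrArg (fun (u : l2Z) => u x₀) h1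
    simp only [hfLx] at this
    rw [this] at hfne
    exact hfne (by simp)
  · -- key scalar identities
    have hε2 : (ε:ℂ) * (ε:ℂ) = 1 := by rcases hε with h | h <;> simp [h]
    have hqq : conj q * q = ((1:ℂ) - (p:ℂ)^2) := by
      have h1 : q * conj q = (‖q‖^2 : ℝ) := by
        rw [Complex.mul_conj]; norm_cast; rw [Complex.normSq_eq_norm_sq]
      have h2 : (‖q‖^2 : ℝ) = 1 - p^2 := by linarith
      rw [mul_comm] at h1; rw [h1, h2]; push_cast; ring
    have hconj : conj q = ((ε:ℂ) + (p:ℂ)) * lam := by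
      apply mul_left_cancel₀ hεp
      have : ((ε:ℂ) - p) * conj q = conj q * (q * lam) := by rw [hlam]; ring
      rw [this, ← mul_assoc, hqq]
      have : ((ε:ℂ) - p) * (((ε:ℂ) + p) * lam) = ((ε:ℂ)*(ε:ℂ) - p^2) * lam := by ring
      rw [this, hε2]
    have hCoin : CoinOp a b hab (WithLp.toLp 2 (fL, gL) : H2) = (δ:ℂ) • (WithLp.toLp 2 (fL, gL) : H2) := by
      rw [CoinOp_pair]
      have hsm : (δ:ℂ) • (WithLp.toLp 2 (fL, gL) : H2) = (WithLp.toLp 2 ((δ:ℂ) • fL, (δ:ℂ) • gL) : H2) := rfl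
      rw [hsm, pair_eq_iff]
      constructor
      · apply lp.ext; funext x
        have h1 : ∀ (u v : l2Z) (x : ℤ), (u + v) x = u x + v x := fun u v x => by simp
        rw [h1]
        have h2 : ((δ:ℂ) • fL) x = (δ:ℂ) * f x := by rw [lp.coeFn_smul, Pi.smul_apply, smul_eq_mul, hfLx]
        rw [h2]
        show (a x : ℂ) * f x + conj (b x) * (lam * f (x-1)) = (δ:ℂ) * f x
        linear_combination hC1 x
      · apply lp.ext; funext x
        have h1 : ∀ (u v : l2Z) (x : ℤ), (u + v) x = u x + v x := fun u v x => by simp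
        rw [h1]
        have h2 : ((δ:ℂ) • gL) x = (δ:ℂ) * (lam * f (x-1)) := by rw [lp.coeFn_smul, Pi.smul_apply, smul_eq_mul, hgLx]
        rw [h2]
        show b x * f x + (-((a x : ℂ) * (lam * f (x-1)))) = (δ:ℂ) * (lam * f (x-1))
        linear_combination hC2 x
    have hGamma : GammaOp p q (WithLp.toLp 2 (fL, gL) : H2) = (ε:ℂ) • (WithLp.toLp 2 (fL, gL) : H2) := by
      rw [GammaOp_pair]
      have hsm : (ε:ℂ) • (WithLp.toLp 2 (fL, gL) : H2) = (WithLp.toLp 2 ((ε:ℂ) • fL, (ε:ℂ) • gL) : H2) := rfl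
      rw [hsm, pair_eq_iff]
      constructor
      · apply lp.ext; funext x
        have h1 : ∀ (u v : l2Z) (x : ℤ), (u + v) x = u x + v x := fun u v x => by simp
        rw [h1]
        have h2 : ((ε:ℂ) • fL) x = (ε:ℂ) * f x := by rw [lp.coeFn_smul, Pi.smul_apply, smul_eq_mul, hfLx]
        have h3 : ((p:ℂ) • fL) x = (p:ℂ) * f x := by rw [lp.coeFn_smul, Pi.smul_apply, smul_eq_mul, hfLx]
        have h4 : (q • Lop gL) x = q * (lam * f ((x+1)-1)) := by
          have hL : (Lop gL) x = gL (x+1) := rfl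
          rw [lp.coeFn_smul, Pi.smul_apply, smul_eq_mul, hL, hgLx]
        rw [h2, h3, h4]
        simp only [add_sub_cancel_right]
        linear_combination (f x) * hlam
      · apply lp.ext; funext x
        have h1 : ∀ (u v : l2Z) (x : ℤ), (u + v) x = u x + v x := fun u v x => by simp
        rw [h1]
        have h2 : ((ε:ℂ) • gL) x = (ε:ℂ) * (lam * f (x-1)) := by rw [lp.coeFn_smul, Pi.smul_apply, smul_eq_mul, hgLx]
        have h3 : (conj q • (ContinuousLinearMap.adjoint Lop fL)) x = conj q * f (x-1) := by
          have := adjoint_Lop_apply fL x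
          simp only [lp.coeFn_smul, Pi.smul_apply, smul_eq_mul, this, hfLx]
        have h4 : (-((p:ℂ) • gL)) x = -((p:ℂ) * (lam * f (x-1))) := by
          rw [lp.coeFn_neg, Pi.neg_apply, lp.coeFn_smul, Pi.smul_apply, smul_eq_mul, hgLx]
        rw [h2, h3, h4]
        linear_combination (f (x-1)) * hconj
    have hcomp : (GammaOp p q ∘L CoinOp a b hab) (WithLp.toLp 2 (fL, gL) : H2)
        = ((δ * ε : ℝ) : ℂ) • (WithLp.toLp 2 (fL, gL) : H2) := by
      rw [ContinuousLinearMap.comp_apply, hCoin, map_smul, hGamma, smul_smul]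
      norm_cast
    rcases hδ with h1 | h1 <;> rcases hε with h2 | h2
    · left; rw [hcomp, h1, h2]; norm_num
    · right; rw [hcomp, h1, h2]; norm_num
    · right; rw [hcomp, h1, h2]; norm_num
    · left; rw [hcomp, h1, h2]; norm_num

/-! ### Auxiliary lemmas for the eigenvector construction -/

lemma memlp_geom (f : ℤ → ℂ) (N M : ℤ) (θ : ℝ) (hθ0 : 0 ≤ θ) (hθ1 : θ < 1)
    (hR : ∀ x : ℤ, N ≤ x → ‖f (x+1)‖ ≤ θ * ‖f x‖)
    (hL : ∀ x : ℤ, x ≤ M → ‖f (x-1)‖ ≤ θ * ‖f x‖) : Memℓp f 2 := by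
  apply memℓp_gen
  have h2 : ∀ y : ℂ, ‖y‖ ^ (2:ℝ≥0∞).toReal = ‖y‖^(2:ℕ) := by
    intro y
    rw [show (2:ℝ≥0∞).toReal = ((2:ℕ):ℝ) by norm_num, Real.rpow_natCast]
  simp only [h2]
  have hθ2 : θ^2 < 1 := by nlinarith
  apply Summable.of_nat_of_neg
  · apply summable_of_ratio_norm_eventually_le hθ2
    rw [eventually_atTop]
    refine ⟨N.toNat, fun n hn => ?_⟩
    have hN : N ≤ (n:ℤ) := le_trans (Int.self_le_toNat N) (by exact_mod_cast hn)
    have := hR n hN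
    rw [Real.norm_of_nonneg (by positivity), Real.norm_of_nonneg (by positivity)]
    have hcast : ((n+1 : ℕ) : ℤ) = (n:ℤ) + 1 := by push_cast; ring
    rw [hcast]
    calc ‖f ((n:ℤ)+1)‖^2 ≤ (θ * ‖f n‖)^2 := by
          apply pow_le_pow_left₀ (norm_nonneg _) this
      _ = θ^2 * ‖f (n:ℤ)‖^2 := by ring
  · apply summable_of_ratio_norm_eventually_le hθ2
    rw [eventually_atTop]
    refine ⟨(-M).toNat, fun n hn => ?_⟩
    have hM : (-(n:ℤ)) ≤ M := by
      have : -M ≤ (n:ℤ) := le_trans (Int.self_le_toNat _) (by exact_mod_cast hn)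
      omega
    have := hL (-(n:ℤ)) hM
    rw [Real.norm_of_nonneg (by positivity), Real.norm_of_nonneg (by positivity)]
    have hcast : (-((n+1 : ℕ) : ℤ)) = (-(n:ℤ)) - 1 := by push_cast; ring
    rw [hcast]
    calc ‖f ((-(n:ℤ))-1)‖^2 ≤ (θ * ‖f (-(n:ℤ))‖)^2 := by
          apply pow_le_pow_left₀ (norm_nonneg _) this
      _ = θ^2 * ‖f (-(n:ℤ))‖^2 := by ring

lemma Ioc_insert' (x₀ x : ℤ) (h : x₀ < x) :
    Finset.Ioc x₀ x = insert x (Finset.Ioc x₀ (x-1)) := by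
  ext z; simp only [Finset.mem_Ioc, Finset.mem_insert]; omega

lemma prod_Ioc_step (r : ℤ → ℂ) (x₀ x : ℤ) (h : x₀ < x) :
    (∏ y ∈ Finset.Ioc x₀ x, r y) = r x * ∏ y ∈ Finset.Ioc x₀ (x-1), r y := by
  rw [Ioc_insert' x₀ x h, Finset.prod_insert (by simp)]

lemma c12_case3 (δc lam A Bc f2 f1 : ℂ) (hδ2 : δc^2 = 1) (hBB : Bc * conj Bc = 1 - A^2)
    (hne : δc - A ≠ 0) (hrec : f2 = lam * conj Bc / (δc - A) * f1) :
    (A - δc) * f2 + lam * conj Bc * f1 = 0 ∧ Bc * f2 - (A + δc) * lam * f1 = 0 := by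
  have e1 : lam * conj Bc / (δc - A) * (δc - A) = lam * conj Bc := div_mul_cancel₀ _ hne
  constructor
  · rw [hrec]; linear_combination (-f1) * e1
  · have hX : (δc - A) * (Bc * f2 - (A + δc) * lam * f1) = 0 := by
      rw [hrec]
      linear_combination (Bc*f1) * e1 + (lam*f1) * hBB - (lam*f1) * hδ2
    rcases mul_eq_zero.mp hX with h | h
    · exact absurd h hne
    · exact h

lemma c12_zero (δc lam A Bc f2 f1 : ℂ) (h2 : f2 = 0) (h1 : f1 = 0) :
    (A - δc) * f2 + lam * conj Bc * f1 = 0 ∧ Bc * f2 - (A + δc) * lam * f1 = 0 := by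
  rw [h2, h1]; constructor <;> ring

lemma c12_atA (δc lam A Bc f2 f1 : ℂ) (hA : A = δc) (hB : Bc = 0) (h1 : f1 = 0) :
    (A - δc) * f2 + lam * conj Bc * f1 = 0 ∧ Bc * f2 - (A + δc) * lam * f1 = 0 := by
  rw [hA, hB, h1, map_zero]; constructor <;> ring

lemma c12_atB (δc lam A Bc f2 f1 : ℂ) (hA : A = -δc) (hB : Bc = 0) (h2 : f2 = 0) :
    (A - δc) * f2 + lam * conj Bc * f1 = 0 ∧ Bc * f2 - (A + δc) * lam * f1 = 0 := by
  rw [hA, hB, h2, map_zero]; constructor <;> ring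
lemma right_bound (p ε δ : ℝ) (lam : ℂ) (a : ℤ → ℝ) (b : ℤ → ℂ)
    (ap : ℝ) (bp : ℂ) (haP : Tendsto a atTop (nhds ap)) (hbP : Tendsto b atTop (nhds bp))
    (hδ2 : δ^2 = 1) (hε2 : ε^2 = 1)
    (hμ : ‖lam‖^2 * (1 - p^2) = (ε - p)^2)
    (hs1 : -1 < ε*p) (hs2 : ε*p < 1)
    (habs : ap^2 ≤ 1) (hbpn : ‖bp‖^2 = 1 - ap^2)
    (ht : δ*ap < ε*p) :
    ∃ θ : ℝ, 0 ≤ θ ∧ θ < 1 ∧ ∃ N : ℤ, ∀ x, N ≤ x →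
      ‖lam * conj (b x) / ((δ:ℂ) - (a x:ℂ))‖ ≤ θ := by
  have hp2 : p^2 < 1 := by nlinarith [sq_nonneg (ε*p), sq_nonneg (ε-p), sq_nonneg (ε+p)]
  have htm1 : δ*ap < 1 := by nlinarith
  have hδap : δ ≠ ap := by
    intro h; rw [h] at htm1; nlinarith
  have hne : (δ:ℂ) - (ap:ℂ) ≠ 0 := by
    intro h
    exact hδap (by exact_mod_cast sub_eq_zero.mp h)
  have hT : Tendsto (fun x => lam * conj (b x) / ((δ:ℂ) - (a x:ℂ))) atTop
      (nhds (lam * conj bp / ((δ:ℂ) - (ap:ℂ)))) := by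
    apply Tendsto.div
    · exact tendsto_const_nhds.mul ((Complex.continuous_conj.tendsto bp).comp hbP)
    · exact tendsto_const_nhds.sub ((Complex.continuous_ofReal.tendsto ap).comp haP)
    · exact hne
  have hnorm : Tendsto (fun x => ‖lam * conj (b x) / ((δ:ℂ) - (a x:ℂ))‖) atTop
      (nhds ‖lam * conj bp / ((δ:ℂ) - (ap:ℂ))‖) := hT.norm
  have hd : (0:ℝ) < |δ - ap| := abs_pos.mpr (sub_ne_zero.mpr hδap)
  have hlt : ‖lam * conj bp / ((δ:ℂ) - (ap:ℂ))‖ < 1 := by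
    have hcast : (δ:ℂ) - (ap:ℂ) = ((δ - ap : ℝ) : ℂ) := by push_cast; ring
    rw [norm_div, norm_mul, RCLike.norm_conj, hcast, Complex.norm_real, Real.norm_eq_abs,
      div_lt_one hd]
    have h1 : ‖lam‖^2 * ‖bp‖^2 * (1 - p^2) = (ε-p)^2 * (1-ap^2) := by
      rw [hbpn]; linear_combination (1-ap^2) * hμ
    have expand : (δ - ap)^2*(1-p^2) - (ε-p)^2*(1-ap^2)
        = 2*(1-ε*p)*(1-δ*ap)*(ε*p-δ*ap) := by
      linear_combination (1 - p^2 - 2*ap^2 + 2*ε*ap^2*p) * hδ2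
        + (-1 + ap^2 + 2*p^2 - 2*δ*ap*p^2) * hε2
    have hpos : 0 < 2*(1-ε*p)*(1-δ*ap)*(ε*p-δ*ap) := by
      have u1 : (0:ℝ) < 1 - ε*p := by linarith
      have u2 : (0:ℝ) < 1 - δ*ap := by linarith
      have u3 : (0:ℝ) < ε*p - δ*ap := by linarith
      positivity
    have hlt2 : (ε-p)^2*(1-ap^2) < (δ-ap)^2*(1-p^2) := by linarith
    have hsq : (‖lam‖*‖bp‖)^2 < (δ-ap)^2 := by
      have hstep : (‖lam‖*‖bp‖)^2 * (1-p^2) < (δ-ap)^2 * (1-p^2) := by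
        rw [mul_pow]; linarith
      exact lt_of_mul_lt_mul_right hstep (by linarith)
    have habs2 : |δ - ap|^2 = (δ - ap)^2 := sq_abs _
    have h0 : (0:ℝ) ≤ |δ - ap| := abs_nonneg _
    refine lt_of_pow_lt_pow_left₀ 2 h0 ?_
    rw [habs2]; exact hsq
  set L := ‖lam * conj bp / ((δ:ℂ) - (ap:ℂ))‖ with hL
  refine ⟨(L+1)/2, by positivity, by linarith, ?_⟩
  have hev : ∀ᶠ x in atTop, ‖lam * conj (b x) / ((δ:ℂ) - (a x:ℂ))‖ < (L+1)/2 :=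
    hnorm.eventually_lt_const (by linarith)
  rcases eventually_atTop.mp hev with ⟨N, hN⟩
  exact ⟨N, fun x hx => le_of_lt (hN x hx)⟩

set_option maxHeartbeats 2000000 in
lemma left_bound (p ε δ : ℝ) (lam : ℂ) (a : ℤ → ℝ) (b : ℤ → ℂ)
    (hab : ∀ x, (a x)^2 + ‖b x‖^2 = 1)
    (am : ℝ) (haM : Tendsto a atBot (nhds am))
    (hδ2 : δ^2 = 1) (hε2 : ε^2 = 1)
    (hμ : ‖lam‖^2 * (1 - p^2) = (ε - p)^2)
    (hs1 : -1 < ε*p) (hs2 : ε*p < 1)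
    (hams : am^2 ≤ 1)
    (ht : ε*p < δ*am)
    (hS : ∀ x, a x ≠ δ) :
    ∃ θ : ℝ, 0 ≤ θ ∧ θ < 1 ∧ ∃ M : ℤ, ∀ x, x ≤ M →
      1 ≤ θ * ‖lam * conj (b x) / ((δ:ℂ) - (a x:ℂ))‖ := by
  have hp2 : p^2 < 1 := by nlinarith [sq_nonneg (ε*p), sq_nonneg (ε-p), sq_nonneg (ε+p)]
  set μ := ‖lam‖^2 with hμdef
  have hμpos : 0 < μ := by
    have h1 : (ε-p)^2 > 0 := by
      have : ε - p ≠ 0 := by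
        intro h
        have : ε = p := by linarith
        nlinarith [hε2]
      positivity
    nlinarith
  have hμs : μ * (1 + ε*p) = 1 - ε*p := by
    have key : μ * (1 - p^2) = (ε-p)^2 := hμ
    have h2 : (ε-p)^2 = (1 - ε*p)^2 := by linear_combination (1 - p^2) * hε2
    have h3 : (1 - p^2) = (1 - ε*p)*(1 + ε*p) := by linear_combination (p^2) * hε2
    have h4 : μ * ((1 - ε*p)*(1 + ε*p)) = (1 - ε*p)^2 := by rw [← h3, key, h2]
    have h5 : (1 - ε*p) ≠ 0 := by intro h; linarith [hs2]
    have h6 : (1 - ε*p) * (μ * (1 + ε*p)) = (1 - ε*p) * (1 - ε*p) := by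
      rw [← mul_assoc] at h4 ⊢
      linear_combination h4
    exact mul_left_cancel₀ h5 (by linear_combination h6)
  set tm := δ * am with htmdef
  have htm1 : tm ≤ 1 := by nlinarith [hδ2, sq_nonneg (δ*am - 1), sq_nonneg (δ*am + 1)]
  have h1tm : 0 < 1 + tm := by linarith
  set c : ℝ := ((1-tm)/(1+tm) + μ)/2 with hcdef
  have hratμ : (1-tm)/(1+tm) < μ := by
    rw [div_lt_iff₀ h1tm]
    nlinarith [hμs]
  have hc0 : 0 < c := by
    have : 0 ≤ (1-tm)/(1+tm) := div_nonneg (by linarith) (by linarith)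
    rw [hcdef]; linarith
  have hcμ : c < μ := by rw [hcdef]; linarith
  have hratc : (1-tm)/(1+tm) < c := by rw [hcdef]; linarith
  set θ := Real.sqrt (c/μ) with hθdef
  have hθsq : θ^2 = c/μ := Real.sq_sqrt (by positivity)
  have hθ0 : 0 ≤ θ := Real.sqrt_nonneg _
  have hθ1 : θ < 1 := by
    rw [hθdef]
    have : c/μ < 1 := by rw [div_lt_one hμpos]; exact hcμ
    calc Real.sqrt (c/μ) < Real.sqrt 1 := by
          apply Real.sqrt_lt_sqrt (by positivity) this
      _ = 1 := Real.sqrt_one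
  have hc2 : θ^2 * μ = c := by rw [hθsq]; exact div_mul_cancel₀ c (ne_of_gt hμpos)
  -- eventual inequality
  have hTc : Tendsto (fun x => (1 - δ * a x) - c * (1 + δ * a x)) atBot
      (nhds ((1 - tm) - c * (1 + tm))) := by
    apply Tendsto.sub
    · exact tendsto_const_nhds.sub (tendsto_const_nhds.mul haM)
    · exact tendsto_const_nhds.mul (tendsto_const_nhds.add (tendsto_const_nhds.mul haM))
  have hlim : (1 - tm) - c * (1 + tm) < 0 := by
    have := (div_lt_iff₀ h1tm).mp hratc
    linarith
  have hev : ∀ᶠ x in atBot, (1 - δ * a x) - c * (1 + δ * a x) < 0 :=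
    hTc.eventually_lt_const hlim
  rcases eventually_atBot.mp hev with ⟨M, hM⟩
  refine ⟨θ, hθ0, hθ1, M, fun x hx => ?_⟩
  have hx1 := hM x hx
  have habx := hab x
  have hSx : a x ≠ δ := hS x
  clear hM hev hTc hS hab haM hlim hratc hratμ hμs ht hams hx hε2 hμ hp2 hs1 hs2
  set t := δ * a x with htdef
  have hax2 : (a x)^2 ≤ 1 := by nlinarith [habx, sq_nonneg ‖b x‖]
  have ht1 : t ≤ 1 := by nlinarith [hδ2, sq_nonneg (δ*a x - 1), sq_nonneg (δ*a x + 1)]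
  have htne : t ≠ 1 := by
    intro h
    apply hSx
    have : δ * t = δ * 1 := by rw [h]
    rw [htdef] at this
    nlinarith [hδ2]
  have ht1' : t < 1 := lt_of_le_of_ne ht1 htne
  have haxδ : a x ≠ δ := hSx
  have hd : (0:ℝ) < |δ - a x| := abs_pos.mpr (sub_ne_zero.mpr (fun h => haxδ h.symm))
  have hbx2 : ‖b x‖^2 = 1 - (a x)^2 := by linarith [habx]
  -- norm identity
  have hcast : (δ:ℂ) - ((a x : ℝ):ℂ) = ((δ - a x : ℝ) : ℂ) := by push_cast; ring
  have hrn : ‖lam * conj (b x) / ((δ:ℂ) - (a x:ℂ))‖ = ‖lam‖ * ‖b x‖ / |δ - a x| := by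
    rw [norm_div, norm_mul, RCLike.norm_conj, hcast, Complex.norm_real, Real.norm_eq_abs]
  rw [hrn]
  -- key squared inequality
  have hx1' : 1 - t < c * (1 + t) := by linarith
  have h1t : 0 < 1 - t := by linarith
  have e1 : (δ - a x)^2 = (1 - t)^2 := by
    rw [htdef]; linear_combination (1 - (a x)^2) * hδ2
  have t2e : t^2 = (a x)^2 := by rw [htdef]; linear_combination (a x)^2 * hδ2
  have hsq : (δ - a x)^2 ≤ c * (1 - (a x)^2) := by
    nlinarith [mul_lt_mul_of_pos_right hx1' h1t, e1, t2e]
  have key : |δ - a x| ≤ θ * (‖lam‖ * ‖b x‖) := by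
    have hrhs0 : 0 ≤ θ * (‖lam‖ * ‖b x‖) := by positivity
    refine le_of_pow_le_pow_left₀ (n := 2) (by norm_num) hrhs0 ?_
    have expand2 : (θ * (‖lam‖ * ‖b x‖))^2 = θ^2 * μ * ‖b x‖^2 := by
      rw [hμdef]; ring
    rw [_root_.sq_abs, expand2, hc2, hbx2]
    exact hsq
  rw [← mul_div_assoc, le_div_iff₀ hd]
  linarith [key]

set_option maxHeartbeats 2000000 in
lemma master (p : ℝ) (q : ℂ) (hpq : p ^ 2 + ‖q‖ ^ 2 = 1)
    (a : ℤ → ℝ) (b : ℤ → ℂ) (hab : ∀ x, (a x) ^ 2 + ‖b x‖ ^ 2 = 1)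
    (ap am : ℝ) (bp : ℂ)
    (haP : Tendsto a atTop (nhds ap)) (haM : Tendsto a atBot (nhds am))
    (hbP : Tendsto b atTop (nhds bp))
    (ε δ : ℝ) (hε : ε = 1 ∨ ε = -1) (hδ : δ = 1 ∨ δ = -1)
    (htP : δ*ap < ε*p) (htM : ε*p < δ*am) :
    ∃ ψ : H2, ψ ≠ 0 ∧
      ((GammaOp p q ∘L CoinOp a b hab) ψ = ψ ∨ (GammaOp p q ∘L CoinOp a b hab) ψ = -ψ) := by
  have hε2 : ε^2 = 1 := by rcases hε with h|h <;> rw [h] <;> norm_num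
  have hδ2 : δ^2 = 1 := by rcases hδ with h|h <;> rw [h] <;> norm_num
  have hax2 : ∀ x, (a x)^2 ≤ 1 := fun x => by nlinarith [hab x, sq_nonneg ‖b x‖]
  have hapsq : ap^2 ≤ 1 := le_of_tendsto (haP.pow 2) (Filter.Eventually.of_forall hax2)
  have hamsq : am^2 ≤ 1 := le_of_tendsto (haM.pow 2) (Filter.Eventually.of_forall hax2)
  have hδap2 : (δ*ap)^2 = ap^2 := by linear_combination ap^2 * hδ2
  have hδam2 : (δ*am)^2 = am^2 := by linear_combination am^2 * hδ2
  have habs_ap : -1 ≤ δ*ap := by nlinarith [sq_nonneg (δ*ap+1)]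
  have habs_am : δ*am ≤ 1 := by nlinarith [sq_nonneg (δ*am-1)]
  have hs1 : -1 < ε*p := by linarith
  have hs2 : ε*p < 1 := by linarith
  have hεp2 : (ε*p)^2 = p^2 := by linear_combination p^2 * hε2
  have hp2 : p^2 < 1 := by nlinarith [sq_nonneg (ε*p+1), sq_nonneg (ε*p-1)]
  have hq2 : ‖q‖^2 = 1 - p^2 := by linarith
  have hq0 : q ≠ 0 := by
    intro h; rw [h, norm_zero] at hq2; nlinarith
  have hεpR : ε - p ≠ 0 := by intro h; nlinarith
  have hεpC : (ε:ℂ) - (p:ℂ) ≠ 0 := by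
    intro h
    have h2 : ((ε - p : ℝ) : ℂ) = 0 := by push_cast; linear_combination h
    exact hεpR (by exact_mod_cast h2)
  set lam : ℂ := ((ε:ℂ) - (p:ℂ)) / q with hlamdef
  have hlam : q * lam = (ε:ℂ) - (p:ℂ) := by
    rw [hlamdef, mul_comm]; exact div_mul_cancel₀ _ hq0
  have hlamne : lam ≠ 0 := div_ne_zero hεpC hq0
  have hμ : ‖lam‖^2 * (1 - p^2) = (ε - p)^2 := by
    have h1 : ‖lam‖ = |ε - p| / ‖q‖ := by
      rw [hlamdef, norm_div]; congr 1
      rw [show (ε:ℂ)-(p:ℂ) = ((ε-p:ℝ):ℂ) by push_cast; ring, Complex.norm_real,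
        Real.norm_eq_abs]
    rw [h1, div_pow, _root_.sq_abs, hq2]
    exact div_mul_cancel₀ _ (by nlinarith : (1:ℝ)-p^2 ≠ 0)
  have hbpn : ‖bp‖^2 = 1 - ap^2 := by
    have h1 : Tendsto (fun x => (a x)^2 + ‖b x‖^2) atTop (nhds (ap^2 + ‖bp‖^2)) :=
      (haP.pow 2).add (hbP.norm.pow 2)
    have heq : (fun x => (a x)^2 + ‖b x‖^2) = fun _ => (1:ℝ) := funext hab
    rw [heq] at h1
    have h2 := tendsto_nhds_unique h1 tendsto_const_nhds
    linarith
  set r : ℤ → ℂ := fun x => lam * conj (b x) / ((δ:ℂ) - ((a x : ℝ):ℂ)) with hrdef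
  have hBBx : ∀ x, b x * conj (b x) = 1 - ((a x:ℝ):ℂ)^2 := by
    intro x
    rw [Complex.mul_conj]
    have h1 : Complex.normSq (b x) = 1 - (a x)^2 := by
      rw [Complex.normSq_eq_norm_sq]; linarith [hab x]
    rw [h1]; push_cast; ring
  have hδ2C : ((δ:ℝ):ℂ)^2 = 1 := by exact_mod_cast congrArg (fun t : ℝ => (t:ℂ)) hδ2
  have hδaC : ∀ x, a x ≠ δ → (δ:ℂ) - ((a x:ℝ):ℂ) ≠ 0 := by
    intro x h
    apply sub_ne_zero.mpr
    intro hc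
    exact h (by exact_mod_cast hc.symm)
  have hbzero : ∀ x, (a x)^2 = 1 → b x = 0 := by
    intro x h
    have h2 := hab x
    have h3 : ‖b x‖ = 0 := by nlinarith [norm_nonneg (b x)]
    exact norm_eq_zero.mp h3
  have hbne : ∀ x, a x ≠ δ → a x ≠ -δ → b x ≠ 0 := by
    intro x h1 h2 hb
    have h3 := hab x
    rw [hb, norm_zero] at h3
    have h4 : (a x - 1)*(a x + 1) = 0 := by nlinarith
    rcases hδ with hd | hd <;> rcases mul_eq_zero.mp h4 with h5 | h5
    · exact h1 (by rw [hd]; linarith)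
    · exact h2 (by rw [hd]; linarith)
    · exact h2 (by rw [hd]; linarith)
    · exact h1 (by rw [hd]; linarith)
  have hrne : ∀ x, a x ≠ δ → a x ≠ -δ → r x ≠ 0 := by
    intro x h1 h2
    rw [hrdef]
    apply div_ne_zero
    · apply mul_ne_zero hlamne
      intro hc
      apply hbne x h1 h2
      have := congrArg (starRingEnd ℂ) hc
      simpa using this
    · exact hδaC x h1
  have hapδ : ap ≠ δ := by
    intro h; rw [h] at htP; nlinarith
  have hamδ : am ≠ -δ := by
    intro h; rw [h] at htM; nlinarith
  rcases eventually_atTop.mp (haP.eventually_ne hapδ) with ⟨NA, hNA⟩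
  rcases eventually_atBot.mp (haM.eventually_ne hamδ) with ⟨MB, hMB⟩
  by_cases hA : ∃ x, a x = δ
  · -- Case A : the set {a = δ} is nonempty; it is bounded above.
    have hbdd : ∀ z, a z = δ → z ≤ NA := by
      intro z hz
      by_contra h
      push_neg at h
      exact hNA z (by omega) hz
    obtain ⟨x₀, hx₀, hx₀max⟩ := Int.exists_greatest_of_bdd ⟨NA, hbdd⟩ hA
    set f : ℤ → ℂ := fun x => if x < x₀ then 0 else ∏ y ∈ Finset.Ioc x₀ x, r y with hfdef
    have hf0 : ∀ x, x < x₀ → f x = 0 := by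
      intro x h; simp only [hfdef]; rw [if_pos h]
    have hfa : f x₀ = 1 := by
      simp only [hfdef]; rw [if_neg (lt_irrefl x₀), Finset.Ioc_self, Finset.prod_empty]
    have hfrec : ∀ x, x₀ < x → f x = r x * f (x-1) := by
      intro x h
      simp only [hfdef]
      rw [if_neg (by omega), if_neg (by omega)]
      exact prod_Ioc_step r x₀ x h
    have hb₀ : b x₀ = 0 := hbzero x₀ (by rw [hx₀]; exact hδ2)
    have hC : ∀ x, ((a x : ℂ) - (δ:ℂ)) * f x + lam * conj (b x) * f (x-1) = 0 ∧
        b x * f x - ((a x : ℂ) + (δ:ℂ)) * lam * f (x-1) = 0 := by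
      intro x
      rcases lt_trichotomy x x₀ with h | h | h
      · exact c12_zero _ _ _ _ _ _ (hf0 x h) (hf0 (x-1) (by omega))
      · subst h
        exact c12_atA _ _ _ _ _ _ (by exact_mod_cast hx₀) hb₀ (hf0 (x-1) (by omega))
      · have haxδ : a x ≠ δ := fun hc => by have := hx₀max x hc; omega
        exact c12_case3 _ lam _ _ _ _ hδ2C (hBBx x) (hδaC x haxδ) (hfrec x h)
    obtain ⟨θ, hθ0, hθ1, N, hN⟩ :=
      right_bound p ε δ lam a b ap bp haP hbP hδ2 hε2 hμ hs1 hs2 hapsq hbpn htP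
    have hN' : ∀ x, N ≤ x → ‖r x‖ ≤ θ := fun x hx => hN x hx
    have hf : Memℓp f 2 := by
      apply memlp_geom f (max N x₀) x₀ θ hθ0 hθ1
      · intro x hx
        have h1 : x₀ < x + 1 := by have := le_max_right N x₀; omega
        rw [hfrec (x+1) h1]
        simp only [add_sub_cancel_right]
        rw [norm_mul]
        exact mul_le_mul_of_nonneg_right (hN' (x+1) (by have := le_max_left N x₀; omega))
          (norm_nonneg _)
      · intro x hx
        rw [hf0 (x-1) (by omega), norm_zero]
        positivity
    exact assemble p q hpq a b hab ε δ hε hδ hεpC lam hlam f hf x₀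
      (by rw [hfa]; exact one_ne_zero) (fun x => (hC x).1) (fun x => (hC x).2)
  · push_neg at hA
    have hS : ∀ x, a x ≠ δ := hA
    obtain ⟨θ, hθ0, hθ1, M, hM⟩ :=
      left_bound p ε δ lam a b hab am haM hδ2 hε2 hμ hs1 hs2 hamsq htM hS
    have hM' : ∀ x, x ≤ M → 1 ≤ θ * ‖r x‖ := fun x hx => hM x hx
    by_cases hB : ∃ x, a x = -δ
    · -- Case B : {a = -δ} nonempty, bounded below
      have hbdd : ∀ z, a z = -δ → MB ≤ z := by
        intro z hz
        by_contra h
        push_neg at h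
        exact hMB z (by omega) hz
      obtain ⟨x₁, hx₁, hx₁min⟩ := Int.exists_least_of_bdd ⟨MB, hbdd⟩ hB
      set f : ℤ → ℂ := fun x => if x₁ ≤ x then 0 else ∏ y ∈ Finset.Ioc x (x₁-1), (r y)⁻¹
        with hfdef
      have hf0 : ∀ x, x₁ ≤ x → f x = 0 := by
        intro x h; simp only [hfdef]; rw [if_pos h]
      have hfa : f (x₁-1) = 1 := by
        simp only [hfdef]; rw [if_neg (by omega), Finset.Ioc_self, Finset.prod_empty]
      have hrneB : ∀ x, x < x₁ → r x ≠ 0 := by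
        intro x h
        refine hrne x (hS x) (fun hc => ?_)
        have := hx₁min x hc; omega
      have hfrec : ∀ x, x < x₁ → f x = r x * f (x-1) := by
        intro x h
        simp only [hfdef]
        rw [if_neg (by omega), if_neg (by omega)]
        have hins : Finset.Ioc (x-1) (x₁-1) = insert x (Finset.Ioc x (x₁-1)) := by
          ext z; simp only [Finset.mem_Ioc, Finset.mem_insert]; omega
        rw [hins, Finset.prod_insert (by simp), ← mul_assoc,
          mul_inv_cancel₀ (hrneB x h), one_mul]
      have hb₁ : b x₁ = 0 := hbzero x₁ (by rw [hx₁, neg_pow]; simp [hδ2])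
      have hC : ∀ x, ((a x : ℂ) - (δ:ℂ)) * f x + lam * conj (b x) * f (x-1) = 0 ∧
          b x * f x - ((a x : ℂ) + (δ:ℂ)) * lam * f (x-1) = 0 := by
        intro x
        rcases lt_trichotomy x x₁ with h | h | h
        · exact c12_case3 _ lam _ _ _ _ hδ2C (hBBx x) (hδaC x (hS x)) (hfrec x h)
        · refine c12_atB _ _ _ _ _ _ ?_ (by rw [h]; exact hb₁) (by rw [h]; exact hf0 x₁ le_rfl)
          rw [h, hx₁]; push_cast; ring
        · exact c12_zero _ _ _ _ _ _ (hf0 x (by omega)) (hf0 (x-1) (by omega))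
      have hf : Memℓp f 2 := by
        apply memlp_geom f x₁ (min M (x₁-1)) θ hθ0 hθ1
        · intro x hx
          rw [hf0 (x+1) (by omega), norm_zero]
          positivity
        · intro x hx
          rw [hfrec x (by omega), norm_mul]
          nlinarith [hM' x (by omega), norm_nonneg (f (x-1)), norm_nonneg (r x),
            mul_le_mul_of_nonneg_right (hM' x (by omega)) (norm_nonneg (f (x-1)))]
      exact assemble p q hpq a b hab ε δ hε hδ hεpC lam hlam f hf (x₁-1)
        (by rw [hfa]; exact one_ne_zero) (fun x => (hC x).1) (fun x => (hC x).2)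
    · -- Case C : a x ≠ ±δ everywhere
      push_neg at hB
      have hT : ∀ x, a x ≠ -δ := hB
      have hrne' : ∀ x, r x ≠ 0 := fun x => hrne x (hS x) (hT x)
      set f : ℤ → ℂ := fun x => if 0 ≤ x then ∏ y ∈ Finset.Ioc 0 x, r y
        else ∏ y ∈ Finset.Ioc x 0, (r y)⁻¹ with hfdef
      have hfa : f 0 = 1 := by
        simp only [hfdef]; rw [if_pos le_rfl, Finset.Ioc_self, Finset.prod_empty]
      have hfrec : ∀ x, f x = r x * f (x-1) := by
        intro x
        by_cases h1 : 1 ≤ x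
        · simp only [hfdef]
          rw [if_pos (by omega), if_pos (by omega)]
          exact prod_Ioc_step r 0 x (by omega)
        · have hfx : f x = ∏ y ∈ Finset.Ioc x 0, (r y)⁻¹ := by
            by_cases h2 : x = 0
            · subst h2
              simp only [hfdef]
              rw [if_pos le_rfl, Finset.Ioc_self, Finset.prod_empty, Finset.prod_empty]
            · simp only [hfdef]; rw [if_neg (by omega)]
          have hfx1 : f (x-1) = ∏ y ∈ Finset.Ioc (x-1) 0, (r y)⁻¹ := by
            simp only [hfdef]; rw [if_neg (by omega)]
          rw [hfx, hfx1]
          have hins : Finset.Ioc (x-1) 0 = insert x (Finset.Ioc x 0) := by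
            ext z; simp only [Finset.mem_Ioc, Finset.mem_insert]; omega
          rw [hins, Finset.prod_insert (by simp), ← mul_assoc,
            mul_inv_cancel₀ (hrne' x), one_mul]
      have hC : ∀ x, ((a x : ℂ) - (δ:ℂ)) * f x + lam * conj (b x) * f (x-1) = 0 ∧
          b x * f x - ((a x : ℂ) + (δ:ℂ)) * lam * f (x-1) = 0 := fun x =>
        c12_case3 _ lam _ _ _ _ hδ2C (hBBx x) (hδaC x (hS x)) (hfrec x)
      obtain ⟨θR, hθR0, hθR1, N, hN⟩ :=
        right_bound p ε δ lam a b ap bp haP hbP hδ2 hε2 hμ hs1 hs2 hapsq hbpn htP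
      have hN' : ∀ x, N ≤ x → ‖r x‖ ≤ θR := fun x hx => hN x hx
      have hf : Memℓp f 2 := by
        apply memlp_geom f N M (max θR θ) (le_trans hθR0 (le_max_left _ _)) (max_lt hθR1 hθ1)
        · intro x hx
          rw [hfrec (x+1)]
          simp only [add_sub_cancel_right]
          rw [norm_mul]
          calc ‖r (x+1)‖ * ‖f x‖ ≤ θR * ‖f x‖ :=
                mul_le_mul_of_nonneg_right (hN' (x+1) (by omega)) (norm_nonneg _)
            _ ≤ max θR θ * ‖f x‖ :=
                mul_le_mul_of_nonneg_right (le_max_left _ _) (norm_nonneg _)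
        · intro x hx
          rw [hfrec x, norm_mul]
          have h1 := mul_le_mul_of_nonneg_right (hM' x hx) (norm_nonneg (f (x-1)))
          rw [one_mul] at h1
          calc ‖f (x-1)‖ ≤ θ * ‖r x‖ * ‖f (x-1)‖ := h1
            _ = θ * (‖r x‖ * ‖f (x-1)‖) := by ring
            _ ≤ max θR θ * (‖r x‖ * ‖f (x-1)‖) :=
                mul_le_mul_of_nonneg_right (le_max_right _ _) (by positivity)
      exact assemble p q hpq a b hab ε δ hε hδ hεpC lam hlam f hf 0
        (by rw [hfa]; exact one_ne_zero) (fun x => (hC x).1) (fun x => (hC x).2)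

/-- **Existence of `±1` eigenstates.**  For a split-step quantum walk whose coin has limits
`a(±∞)`, `b(±∞)` with `|a(+∞)| < |p| < |a(-∞)|` or `|a(-∞)| < |p| < |a(+∞)|`, the evolution
operator `U = ΓC` has an eigenvector with eigenvalue `1` or `-1`. -/
theorem exists_eigenvector_of_nonzero_index (p : ℝ) (q : ℂ) (hpq : p ^ 2 + ‖q‖ ^ 2 = 1)
    (a : ℤ → ℝ) (b : ℤ → ℂ) (hab : ∀ x, (a x) ^ 2 + ‖b x‖ ^ 2 = 1)
    (ap am : ℝ) (bp bm : ℂ)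
    (haP : Tendsto a atTop (nhds ap)) (haM : Tendsto a atBot (nhds am))
    (hbP : Tendsto b atTop (nhds bp)) (hbM : Tendsto b atBot (nhds bm))
    (hwind : (|ap| < |p| ∧ |p| < |am|) ∨ (|am| < |p| ∧ |p| < |ap|)) :
    ∃ ψ : H2, ψ ≠ 0 ∧
      ((GammaOp p q ∘L CoinOp a b hab) ψ = ψ ∨ (GammaOp p q ∘L CoinOp a b hab) ψ = -ψ) := by
  rcases hwind with ⟨h1, h2⟩ | ⟨h1, h2⟩
  · set ε : ℝ := if 0 ≤ p then 1 else -1 with hεdef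
    set δ : ℝ := if 0 ≤ am then 1 else -1 with hδdef
    have hε : ε = 1 ∨ ε = -1 := by rw [hεdef]; split_ifs <;> simp
    have hδ : δ = 1 ∨ δ = -1 := by rw [hδdef]; split_ifs <;> simp
    have hεp : ε * p = |p| := by
      rw [hεdef]; split_ifs with h
      · rw [_root_.abs_of_nonneg h]; ring
      · rw [_root_.abs_of_neg (not_le.mp h)]; ring
    have hδam : δ * am = |am| := by
      rw [hδdef]; split_ifs with h
      · rw [_root_.abs_of_nonneg h]; ring
      · rw [_root_.abs_of_neg (not_le.mp h)]; ring
    have htP : δ * ap < ε * p := by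
      rw [hεp]
      calc δ * ap ≤ |δ * ap| := le_abs_self _
        _ = |δ| * |ap| := abs_mul _ _
        _ = |ap| := by rcases hδ with h | h <;> rw [h] <;> simp
        _ < |p| := h1
    have htM : ε * p < δ * am := by rw [hεp, hδam]; exact h2
    exact master p q hpq a b hab ap am bp haP haM hbP ε δ hε hδ htP htM
  · set ε : ℝ := if 0 ≤ p then -1 else 1 with hεdef
    set δ : ℝ := if 0 ≤ ap then -1 else 1 with hδdef
    have hε : ε = 1 ∨ ε = -1 := by rw [hεdef]; split_ifs <;> simp
    have hδ : δ = 1 ∨ δ = -1 := by rw [hδdef]; split_ifs <;> simp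
    have hεp : ε * p = -|p| := by
      rw [hεdef]; split_ifs with h
      · rw [_root_.abs_of_nonneg h]; ring
      · rw [_root_.abs_of_neg (not_le.mp h)]; ring
    have hδap : δ * ap = -|ap| := by
      rw [hδdef]; split_ifs with h
      · rw [_root_.abs_of_nonneg h]; ring
      · rw [_root_.abs_of_neg (not_le.mp h)]; ring
    have htP : δ * ap < ε * p := by
      rw [hεp, hδap]
      exact neg_lt_neg h2
    have htM : ε * p < δ * am := by
      rw [hεp]
      calc -|p| < -|am| := neg_lt_neg h1
        _ = -(|δ| * |am|) := by rcases hδ with h | h <;> rw [h] <;> simp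
        _ = -|δ * am| := by rw [abs_mul]
        _ ≤ δ * am := neg_abs_le _
    exact master p q hpq a b hab ap am bp haP haM hbP ε δ hε hδ htP htM
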